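/- arXiv:0706.0685 — 2 statements merged into one kernel-verified Lean document; each statement's English description precedes it below -/
import Mathlib

section
/- Let X be a random variable taking values in D with density p_X (strictly positive on D), let Z be a real random variable independent of X with E[Z] = 0 and |Z| ≤ b almost surely, and let T be uniformly distributed on [−c, c] with c = a + b, independent of (X, Z). If f : D → [−a, a] is measurable and φ : D → ℂ is square-integrable, then E[ (φ*(X) / p_X(X)) · sgn(f(X) + Z − T) ] = (1/c) ⟨f, φ⟩, where ⟨f, φ⟩ = ∫_D f(x) φ*(x) dx and sgn(u) = +1 if u > 0 and −1 if u ≤ 0. -/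
open MeasureTheory ProbabilityTheory Filter
open scoped ENNReal Topology

noncomputable section

/-- Sign function: `+1` if `u > 0` and `-1` otherwise. -/
def sgn' (u : ℝ) : ℝ := if 0 < u then 1 else -1

/-- Binary-quantized observation of sensor `i`: `B i = sgn (f (X i) + Z i - T i)`. -/
def obsB {E Ω : Type*} (f : E → ℝ) (X : ℕ → Ω → E) (Z T : ℕ → Ω → ℝ)
    (i : ℕ) (ω : Ω) : ℝ :=
  sgn' (f (X i ω) + Z i ω - T i ω)

/-- Estimate of the `j`-th coefficient from the first `n` sensors:
`α̂_j = (c/n) ∑_{i<n} (φ_j(X_i))^* / p_X(X_i) * B_i`. -/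
def alphaHat {E Ω : Type*} (c : ℝ) (pX : E → ℝ) (φ : ℕ → E → ℂ) (f : E → ℝ)
    (X : ℕ → Ω → E) (Z T : ℕ → Ω → ℝ) (n j : ℕ) (ω : Ω) : ℂ :=
  ((c : ℂ) / (n : ℂ)) * ∑ i ∈ Finset.range n,
    (starRingEnd ℂ) (φ j (X i ω)) / (pX (X i ω) : ℂ) * (obsB f X Z T i ω : ℂ)

/-- The `j`-th coefficient of the field `f`: `α_j = ⟨f, φ_j⟩ = ∫_D f (φ_j)^*`. -/
def coeff {E : Type*} [MeasureSpace E] (D : Set E) (f : E → ℝ) (φ : ℕ → E → ℂ)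
    (j : ℕ) : ℂ :=
  ∫ x in D, (f x : ℂ) * (starRingEnd ℂ) (φ j x)

/-- The `m`-term field estimate `f̂_{n,m} = ∑_{j<m} α̂_j φ_j`. -/
def fieldEst {E Ω : Type*} (c : ℝ) (pX : E → ℝ) (φ : ℕ → E → ℂ) (f : E → ℝ)
    (X : ℕ → Ω → E) (Z T : ℕ → Ω → ℝ) (n m : ℕ) (x : E) (ω : Ω) : ℂ :=
  ∑ j ∈ Finset.range m, alphaHat c pX φ f X Z T n j ω * φ j x

/-- The `m`-term approximation `f_m = ∑_{j<m} α_j φ_j`. -/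
def mApprox {E : Type*} [MeasureSpace E] (D : Set E) (f : E → ℝ) (φ : ℕ → E → ℂ)
    (m : ℕ) (x : E) : ℂ :=
  ∑ j ∈ Finset.range m, coeff D f φ j * φ j x

/-- The integrated mean squared error `E[‖f - f̂_{n,m}‖²]`. -/
def intMSE {E Ω : Type*} [MeasureSpace E] [MeasurableSpace Ω] (P : Measure Ω)
    (D : Set E) (c : ℝ) (pX : E → ℝ) (φ : ℕ → E → ℂ) (f : E → ℝ)
    (X : ℕ → Ω → E) (Z T : ℕ → Ω → ℝ) (n m : ℕ) : ℝ :=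
  ∫ ω, (∫ x in D, ‖(f x : ℂ) - fieldEst c pX φ f X Z T n m x ω‖ ^ 2) ∂P

/-- The `m`-term approximation error `ε[f,m] = ∑_{j≥m} |α_j|²`. -/
def tailErr {E : Type*} [MeasureSpace E] (D : Set E) (f : E → ℝ) (φ : ℕ → E → ℂ)
    (m : ℕ) : ℝ :=
  ∑' j : ℕ, ‖coeff D f φ (m + j)‖ ^ 2

/-- The deployment distribution: density `p_X` (w.r.t. Lebesgue measure) on `D`. -/
def deployLaw {E : Type*} [MeasureSpace E] (D : Set E) (pX : E → ℝ) : Measure E :=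
  (volume.restrict D).withDensity fun x => ENNReal.ofReal (pX x)

/-- The threshold distribution: uniform on `[-c, c]`. -/
def threshLaw (c : ℝ) : Measure ℝ :=
  (ENNReal.ofReal (1 / (2 * c))) • volume.restrict (Set.Icc (-c) c)

end

/-!
Conditionally on `X = x`, the uniform dither `T` on `[-c, c]` turns the sign into an unbiased
estimate of `(f x + Z) / c`, because `|f x + Z| ≤ a + b = c`; averaging over `Z`, which has mean
zero, leaves `f x / c`. The remaining expectation over `X` is an integral against `p_X`, which
cancels the importance weight `1 / p_X` and leaves `(1 / c) ∫_D f φ*`.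
-/

theorem measurable_sgn' : Measurable sgn' :=
  Measurable.ite (measurableSet_lt measurable_const measurable_id) measurable_const
    measurable_const

theorem abs_sgn' (u : ℝ) : |sgn' u| = 1 := by
  unfold sgn'; split <;> norm_num

section Dither

instance (c : ℝ) : IsFiniteMeasure (threshLaw c) :=
  ⟨by simp [threshLaw, Real.volume_Icc, ENNReal.mul_lt_top]⟩

theorem integral_sgn'_sub_threshLaw {c u : ℝ} (hc : 0 < c) (hu : u ∈ Set.Icc (-c) c) :
    ∫ t, sgn' (u - t) ∂threshLaw c = u / c := by
  have hpos : Set.EqOn (fun _ => (1 : ℝ)) (fun t => sgn' (u - t)) (Set.Ico (-c) u) :=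
    fun t ht => (if_pos (sub_pos.mpr ht.2)).symm
  have hneg : Set.EqOn (fun _ => (-1 : ℝ)) (fun t => sgn' (u - t)) (Set.Icc u c) :=
    fun t ht => (if_neg (not_lt.mpr (sub_nonpos.mpr ht.1))).symm
  have hdisj : Disjoint (Set.Ico (-c) u) (Set.Icc u c) :=
    Set.disjoint_left.mpr fun _ h₁ h₂ => (not_le.mpr h₁.2) h₂.1
  have hIcc : ∫ t in Set.Icc (-c) c, sgn' (u - t) = 2 * u := by
    rw [← Set.Ico_union_Icc_eq_Icc hu.1 hu.2,
      setIntegral_union hdisj measurableSet_Icc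
        ((integrableOn_const measure_Ico_lt_top.ne).congr_fun hpos measurableSet_Ico)
        ((integrableOn_const measure_Icc_lt_top.ne).congr_fun hneg measurableSet_Icc),
      ← setIntegral_congr_fun measurableSet_Ico hpos,
      ← setIntegral_congr_fun measurableSet_Icc hneg, setIntegral_const, setIntegral_const,
      measureReal_def, measureReal_def, Real.volume_Ico, Real.volume_Icc,
      ENNReal.toReal_ofReal (by linarith [hu.1]), ENNReal.toReal_ofReal (by linarith [hu.2])]
    simp only [smul_eq_mul]
    ring
  rw [threshLaw, integral_smul_measure, hIcc, ENNReal.toReal_ofReal (by positivity), smul_eq_mul]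
  field_simp

theorem integral_sgn'_add_sub_prod_threshLaw {μ : Measure ℝ} [IsProbabilityMeasure μ]
    {c u : ℝ} (hc : 0 < c) (hmean : ∫ z, z ∂μ = 0)
    (hu : ∀ᵐ z ∂μ, u + z ∈ Set.Icc (-c) c) :
    ∫ q, sgn' (u + q.1 - q.2) ∂μ.prod (threshLaw c) = u / c := by
  have hint : Integrable (fun q : ℝ × ℝ => sgn' (u + q.1 - q.2)) (μ.prod (threshLaw c)) :=
    (integrable_const (1 : ℝ)).mono' (measurable_sgn'.comp (by fun_prop)).aestronglyMeasurable
      (.of_forall fun q => (abs_sgn' _).le)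
  have hZint : Integrable (fun z => z) μ := by
    refine (integrable_const (c + |u|)).mono' measurable_id.aestronglyMeasurable ?_
    filter_upwards [hu] with z hz
    rw [Real.norm_eq_abs, abs_le]
    constructor <;> linarith [hz.1, hz.2, neg_abs_le u, le_abs_self u]
  calc ∫ q, sgn' (u + q.1 - q.2) ∂μ.prod (threshLaw c)
      = ∫ z, ∫ t, sgn' (u + z - t) ∂threshLaw c ∂μ := integral_prod _ hint
    _ = ∫ z, (u + z) / c ∂μ := by
      refine integral_congr_ae ?_
      filter_upwards [hu] with z hz
      exact integral_sgn'_sub_threshLaw hc hz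
    _ = u / c := by
      rw [integral_div, integral_add (integrable_const u) hZint, hmean]
      simp

variable {E : Type*} [MeasurableSpace E] {ν : Measure E} {μ : Measure ℝ}
  {g : E → ℂ} {f : E → ℝ}

theorem integrable_mul_sgn'_prod_threshLaw [IsFiniteMeasure μ] (hg : Integrable g ν)
    (hf : Measurable f) (c : ℝ) :
    Integrable (fun p : E × ℝ × ℝ => g p.1 * (sgn' (f p.1 + p.2.1 - p.2.2) : ℂ))
      (ν.prod (μ.prod (threshLaw c))) :=
  (hg.comp_fst _).mul_bdd
    (Complex.measurable_ofReal.comp (measurable_sgn'.comp (by fun_prop))).aestronglyMeasurable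
    (.of_forall fun _ => (by simp [abs_sgn'] : ‖(sgn' _ : ℂ)‖ ≤ 1))

theorem integral_mul_sgn'_prod_threshLaw [SFinite ν] [IsProbabilityMeasure μ]
    (hg : Integrable g ν) (hf : Measurable f) {c : ℝ} (hc : 0 < c) (hmean : ∫ z, z ∂μ = 0)
    (hbd : ∀ᵐ x ∂ν, ∀ᵐ z ∂μ, f x + z ∈ Set.Icc (-c) c) :
    ∫ p, g p.1 * (sgn' (f p.1 + p.2.1 - p.2.2) : ℂ) ∂ν.prod (μ.prod (threshLaw c))
      = ∫ x, g x * ((f x / c : ℝ) : ℂ) ∂ν := by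
  rw [integral_prod _ (integrable_mul_sgn'_prod_threshLaw hg hf c)]
  refine integral_congr_ae ?_
  filter_upwards [hbd] with x hx
  rw [integral_const_mul, integral_complex_ofReal,
    integral_sgn'_add_sub_prod_threshLaw hc hmean hx]

end Dither

section Density

variable {E : Type*} [MeasureSpace E] {D : Set E} {pX : E → ℝ}
  {F : Type*} [NormedAddCommGroup F] [NormedSpace ℝ F]

instance [SigmaFinite (volume : Measure E)] (D : Set E) (pX : E → ℝ) :
    SigmaFinite (deployLaw D pX) := by
  unfold deployLaw; infer_instance

theorem deployLaw_eq_withDensity_toNNReal (D : Set E) (pX : E → ℝ) :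
    deployLaw D pX = (volume.restrict D).withDensity fun x => ((pX x).toNNReal : ℝ≥0∞) :=
  rfl

theorem ae_mem_deployLaw (hD : MeasurableSet D) (pX : E → ℝ) :
    ∀ᵐ x ∂deployLaw D pX, x ∈ D :=
  (withDensity_absolutelyContinuous _ _).ae_le (ae_restrict_mem hD)

theorem toNNReal_smul_inv_smul {r : ℝ} (hr : 0 < r) (y : F) :
    r.toNNReal • r⁻¹ • y = y := by
  rw [NNReal.smul_def, Real.coe_toNNReal _ hr.le, smul_inv_smul₀ hr.ne']

theorem integrable_inv_density_smul_deployLaw (hD : MeasurableSet D) (hpX : Measurable pX)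
    (hpos : ∀ x ∈ D, 0 < pX x) {g : E → F} (hg : IntegrableOn g D) :
    Integrable (fun x => (pX x)⁻¹ • g x) (deployLaw D pX) := by
  rw [deployLaw_eq_withDensity_toNNReal,
    integrable_withDensity_iff_integrable_smul hpX.real_toNNReal]
  exact hg.congr <| ae_restrict_of_forall_mem hD fun x hx =>
    (toNNReal_smul_inv_smul (hpos x hx) _).symm

theorem integral_inv_density_smul_deployLaw (hD : MeasurableSet D) (hpX : Measurable pX)
    (hpos : ∀ x ∈ D, 0 < pX x) (g : E → F) :
    ∫ x, (pX x)⁻¹ • g x ∂deployLaw D pX = ∫ x in D, g x := by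
  rw [deployLaw_eq_withDensity_toNNReal, integral_withDensity_eq_integral_smul hpX.real_toNNReal]
  exact setIntegral_congr_fun hD fun x hx => toNNReal_smul_inv_smul (hpos x hx) _

end Density

theorem stmt0_general
    {d : ℕ} {D : Set (Fin d → ℝ)} (hDcomp : IsCompact D)
    (hDfin : volume D < ⊤)
    {a b c : ℝ} (ha : 0 < a) (hb : 0 < b) (hc : c = a + b)
    {f : (Fin d → ℝ) → ℝ} (hfmeas : Measurable f)
    (hfbd : ∀ x ∈ D, f x ∈ Set.Icc (-a) a)
    {pX : (Fin d → ℝ) → ℝ} (hpXmeas : Measurable pX)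
    (hpXpos : ∀ x ∈ D, 0 < pX x)
    {φ : (Fin d → ℝ) → ℂ}
    (hφL2 : MemLp φ 2 (volume.restrict D))
    {Ω : Type*} [MeasurableSpace Ω] (P : Measure Ω) [IsProbabilityMeasure P]
    (X : Ω → (Fin d → ℝ)) (Z T : Ω → ℝ)
    (hXmeas : Measurable X) (hZmeas : Measurable Z) (hTmeas : Measurable T)
    (μZ : Measure ℝ) [IsProbabilityMeasure μZ]
    (hZmean : (∫ z, z ∂μZ) = 0) (hZsupp : μZ (Set.Icc (-b) b)ᶜ = 0)
    (hlaw : Measure.map (fun ω => (X ω, Z ω, T ω)) P =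
      (deployLaw D pX).prod (μZ.prod (threshLaw c))) :
    (∫ ω, (starRingEnd ℂ) (φ (X ω)) / (pX (X ω) : ℂ) * (sgn' (f (X ω) + Z ω - T ω) : ℂ) ∂P)
      = (1 / (c : ℂ)) * ∫ x in D, (f x : ℂ) * (starRingEnd ℂ) (φ x) := by
  have hD : MeasurableSet D := hDcomp.isClosed.measurableSet
  have hc0 : 0 < c := by rw [hc]; positivity
  have : IsFiniteMeasure (volume.restrict D) := ⟨by simpa using hDfin⟩
  set μ := deployLaw D pX
  have hweight : Integrable (fun x => (starRingEnd ℂ) (φ x) / (pX x : ℂ)) μ := by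
    simpa only [Complex.real_smul, Complex.ofReal_inv, div_eq_inv_mul, Pi.star_apply,
      Complex.star_def] using
      integrable_inv_density_smul_deployLaw hD hpXmeas hpXpos (hφL2.star.integrable one_le_two)
  have hbd : ∀ᵐ x ∂μ, ∀ᵐ z ∂μZ, f x + z ∈ Set.Icc (-c) c := by
    filter_upwards [ae_mem_deployLaw hD pX] with x hx
    filter_upwards [ae_iff.2 hZsupp] with z hz
    constructor <;> linarith [(hfbd x hx).1, (hfbd x hx).2, hz.1, hz.2]
  have hint := integrable_mul_sgn'_prod_threshLaw (μ := μZ) hweight hfmeas c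
  calc _ = ∫ p, (starRingEnd ℂ) (φ p.1) / (pX p.1 : ℂ) * (sgn' (f p.1 + p.2.1 - p.2.2) : ℂ)
          ∂μ.prod (μZ.prod (threshLaw c)) := by
        rw [← hlaw, integral_map (by fun_prop) (hlaw ▸ hint.aestronglyMeasurable)]
    _ = ∫ x, (starRingEnd ℂ) (φ x) / (pX x : ℂ) * ((f x / c : ℝ) : ℂ) ∂μ :=
        integral_mul_sgn'_prod_threshLaw hweight hfmeas hc0 hZmean hbd
    _ = ∫ x, (pX x)⁻¹ • (1 / (c : ℂ) * ((f x : ℂ) * (starRingEnd ℂ) (φ x))) ∂μ := by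
        congr 1 with x
        rw [Complex.real_smul]
        push_cast
        ring
    _ = (1 / (c : ℂ)) * ∫ x in D, (f x : ℂ) * (starRingEnd ℂ) (φ x) := by
        rw [integral_inv_density_smul_deployLaw hD hpXmeas hpXpos, integral_const_mul]

/-- **Expectation identity for a single binary observation.**
`E[(φ*(X)/p_X(X)) · sgn(f(X)+Z−T)] = (1/c) ⟨f, φ⟩`. -/
theorem stmt0
    {d : ℕ} {D : Set (Fin d → ℝ)} (hDcomp : IsCompact D)
    (hDpos : 0 < volume D) (hDfin : volume D < ⊤)
    {a b c : ℝ} (ha : 0 < a) (hb : 0 < b) (hc : c = a + b)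
    {f : (Fin d → ℝ) → ℝ} (hfmeas : Measurable f)
    (hfbd : ∀ x ∈ D, f x ∈ Set.Icc (-a) a)
    {pX : (Fin d → ℝ) → ℝ} (hpXmeas : Measurable pX)
    (hpXpos : ∀ x ∈ D, 0 < pX x) (hpXone : (∫ x in D, pX x) = 1)
    {φ : (Fin d → ℝ) → ℂ} (hφmeas : Measurable φ)
    (hφL2 : MemLp φ 2 (volume.restrict D))
    {Ω : Type*} [MeasurableSpace Ω] (P : Measure Ω) [IsProbabilityMeasure P]
    (X : Ω → (Fin d → ℝ)) (Z T : Ω → ℝ)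
    (hXmeas : Measurable X) (hZmeas : Measurable Z) (hTmeas : Measurable T)
    (μZ : Measure ℝ) [IsProbabilityMeasure μZ]
    (hZmean : (∫ z, z ∂μZ) = 0) (hZsupp : μZ (Set.Icc (-b) b)ᶜ = 0)
    (hlaw : Measure.map (fun ω => (X ω, Z ω, T ω)) P =
      (deployLaw D pX).prod (μZ.prod (threshLaw c))) :
    (∫ ω, (starRingEnd ℂ) (φ (X ω)) / (pX (X ω) : ℂ) * (sgn' (f (X ω) + Z ω - T ω) : ℂ) ∂P)
      = (1 / (c : ℂ)) * ∫ x in D, (f x : ℂ) * (starRingEnd ℂ) (φ x) :=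
  stmt0_general hDcomp hDfin ha hb hc hfmeas hfbd hpXmeas hpXpos hφL2 P X Z T hXmeas hZmeas hTmeas
    μZ hZmean hZsupp hlaw
end

section
/- Let {φ_j}_{j=0}^∞ be an orthonormal basis of L²(D), p_X a density on D with inf_{x∈D} p_X(x) = ν > 0, and {Λ_m} a non-negative increasing sequence with m / Λ_m² → 0 as m → ∞. Define g_m(x, y) = (1/Λ_m) Σ_{j=0}^{m−1} φ_j(x) φ_j*(y) / p_X(y). If for almost every (x, y) ∈ D × D the limit g_∞(x, y) = lim_{m→∞} g_m(x, y) exists, then g_∞(x, y) = 0 for almost every (x, y) ∈ D × D. -/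
open MeasureTheory ProbabilityTheory Filter
open scoped ENNReal Topology

/-!
For fixed `y`, the kernel `g_m(·, y)` is a finite combination of the `φ_j` with coefficients
`φ_j*(y) / (Λ_m p_X(y))`, so by orthonormality its squared `L²` norm in `x` is at most
`Λ_m⁻² ν⁻² ∑_{j<m} |φ_j(y)|²`. Integrating in `y` gives `‖g_m‖²_{L²(D×D)} ≤ m / (Λ_m² ν²) → 0`,
and by Fatou's lemma an a.e. limit of functions whose `L²` norms tend to zero vanishes a.e.
-/

section Orthonormal

variable {α ι : Type*} [MeasurableSpace α] {μ : Measure α} [DecidableEq ι] {φ : ι → α → ℂ}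

theorem integral_norm_sq_sum_of_orthonormal (hφL2 : ∀ j, MemLp (φ j) 2 μ)
    (hON : ∀ j k, ∫ x, φ j x * (starRingEnd ℂ) (φ k x) ∂μ = if j = k then 1 else 0)
    (s : Finset ι) (a : ι → ℂ) :
    ∫ x, ‖∑ j ∈ s, a j * φ j x‖ ^ 2 ∂μ = ∑ j ∈ s, ‖a j‖ ^ 2 := by
  have hint : ∀ j k, Integrable (fun x => φ j x * (starRingEnd ℂ) (φ k x)) μ := fun j k =>
    (hφL2 j).integrable_mul (hφL2 k).star
  apply Complex.ofReal_injective
  calc ((∫ x, ‖∑ j ∈ s, a j * φ j x‖ ^ 2 ∂μ : ℝ) : ℂ)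
      = ∫ x, ∑ j ∈ s, ∑ k ∈ s,
          a j * (starRingEnd ℂ) (a k) * (φ j x * (starRingEnd ℂ) (φ k x)) ∂μ := by
        rw [← integral_complex_ofReal]
        congr 1 with x
        rw [Complex.ofReal_pow, ← Complex.mul_conj', map_sum, Finset.sum_mul_sum]
        simp only [map_mul]
        exact Finset.sum_congr rfl fun j _ => Finset.sum_congr rfl fun k _ => by ring
    _ = ∑ j ∈ s, ∑ k ∈ s, a j * (starRingEnd ℂ) (a k) * if j = k then 1 else 0 := by
        rw [integral_finsetSum _ fun j _ => integrable_finsetSum _ fun k _ =>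
          (hint j k).const_mul _]
        simp only [integral_finsetSum _ fun k _ => (hint _ k).const_mul _,
          integral_const_mul, hON]
    _ = ((∑ j ∈ s, ‖a j‖ ^ 2 : ℝ) : ℂ) := by
        simp [Complex.mul_conj']

theorem lintegral_enorm_sq_sum_of_orthonormal (hφL2 : ∀ j, MemLp (φ j) 2 μ)
    (hON : ∀ j k, ∫ x, φ j x * (starRingEnd ℂ) (φ k x) ∂μ = if j = k then 1 else 0)
    (s : Finset ι) (a : ι → ℂ) :
    ∫⁻ x, ‖∑ j ∈ s, a j * φ j x‖ₑ ^ 2 ∂μ = ∑ j ∈ s, ‖a j‖ₑ ^ 2 := by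
  have hL2 : MemLp (fun x => ∑ j ∈ s, a j * φ j x) 2 μ :=
    memLp_finsetSum s fun j _ => (hφL2 j).const_mul (a j)
  have hsq : ∀ z : ℂ, ‖z‖ₑ ^ 2 = ENNReal.ofReal (‖z‖ ^ 2) := fun z => by
    rw [ENNReal.ofReal_pow (norm_nonneg z), ofReal_norm]
  simp_rw [hsq]
  rw [← ofReal_integral_eq_lintegral_ofReal (hL2.integrable_norm_pow two_ne_zero)
      (ae_of_all _ fun x => by positivity),
    integral_norm_sq_sum_of_orthonormal hφL2 hON, ENNReal.ofReal_sum_of_nonneg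
      fun j _ => by positivity]

theorem lintegral_prod_enorm_sq_kernel_le [SFinite μ] (hφmeas : ∀ j, Measurable (φ j))
    (hφL2 : ∀ j, MemLp (φ j) 2 μ)
    (hON : ∀ j k, ∫ x, φ j x * (starRingEnd ℂ) (φ k x) ∂μ = if j = k then 1 else 0)
    {p : α → ℝ} (hpmeas : Measurable p) {ν : ℝ} (hν : 0 < ν) (hνp : ∀ᵐ y ∂μ, ν ≤ p y)
    (c : ℂ) (s : Finset ι) :
    ∫⁻ z, ‖c * ∑ j ∈ s, φ j z.1 * (starRingEnd ℂ) (φ j z.2) / (p z.2 : ℂ)‖ₑ ^ 2 ∂(μ.prod μ)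
      ≤ ENNReal.ofReal (‖c‖ ^ 2 / ν ^ 2 * s.card) := by
  set a : α → ι → ℂ := fun y j => c * (starRingEnd ℂ) (φ j y) / (p y : ℂ)
  have hcoeff : ∀ᵐ y ∂μ, ∀ j, ‖a y j‖ₑ ^ 2 ≤ ENNReal.ofReal (‖c‖ ^ 2 / ν ^ 2) * ‖φ j y‖ₑ ^ 2 := by
    filter_upwards [hνp] with y hy j
    have : ‖a y j‖ ≤ ‖c‖ / ν * ‖φ j y‖ := by
      simp only [a, norm_div, norm_mul, Complex.norm_conj, Complex.norm_real,
        Real.norm_of_nonneg (hν.le.trans hy)]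
      calc ‖c‖ * ‖φ j y‖ / p y ≤ ‖c‖ * ‖φ j y‖ / ν := by gcongr
        _ = ‖c‖ / ν * ‖φ j y‖ := by ring
    rw [← ofReal_norm, ← ofReal_norm, ← ENNReal.ofReal_pow (norm_nonneg _),
      ← ENNReal.ofReal_pow (norm_nonneg _), ← ENNReal.ofReal_mul (by positivity)]
    refine ENNReal.ofReal_le_ofReal ?_
    calc ‖a y j‖ ^ 2 ≤ (‖c‖ / ν * ‖φ j y‖) ^ 2 := by gcongr
      _ = ‖c‖ ^ 2 / ν ^ 2 * ‖φ j y‖ ^ 2 := by ring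
  have hφsq : ∀ j, ∫⁻ y, ‖φ j y‖ₑ ^ 2 ∂μ = 1 := fun j => by
    simpa using lintegral_enorm_sq_sum_of_orthonormal hφL2 hON {j} 1
  rw [lintegral_prod_symm _ (by fun_prop)]
  calc ∫⁻ y, ∫⁻ x, ‖c * ∑ j ∈ s, φ j x * (starRingEnd ℂ) (φ j y) / (p y : ℂ)‖ₑ ^ 2 ∂μ ∂μ
      = ∫⁻ y, ∑ j ∈ s, ‖a y j‖ₑ ^ 2 ∂μ := by
        refine lintegral_congr fun y => ?_
        rw [← lintegral_enorm_sq_sum_of_orthonormal hφL2 hON s (a y)]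
        congr 1 with x
        simp only [a, Finset.mul_sum]
        congr 2
        exact Finset.sum_congr rfl fun j _ => by ring
    _ ≤ ∫⁻ y, ENNReal.ofReal (‖c‖ ^ 2 / ν ^ 2) * ∑ j ∈ s, ‖φ j y‖ₑ ^ 2 ∂μ := by
        refine lintegral_mono_ae ?_
        filter_upwards [hcoeff] with y hy
        rw [Finset.mul_sum]
        exact Finset.sum_le_sum fun j _ => hy j
    _ = ENNReal.ofReal (‖c‖ ^ 2 / ν ^ 2 * s.card) := by
        rw [lintegral_const_mul _ (by fun_prop), lintegral_finsetSum _ fun j _ => by fun_prop]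
        simp [hφsq, ENNReal.ofReal_mul (by positivity : (0:ℝ) ≤ ‖c‖ ^ 2 / ν ^ 2)]

end Orthonormal

theorem ae_eq_zero_of_tendsto_ae_of_tendsto_lintegral_zero {α : Type*} [MeasurableSpace α]
    {μ : Measure α} {f : ℕ → α → ℝ≥0∞} {g : α → ℝ≥0∞} (hf : ∀ n, AEMeasurable (f n) μ)
    (hfg : ∀ᵐ x ∂μ, Tendsto (fun n => f n x) atTop (𝓝 (g x)))
    (hf0 : Tendsto (fun n => ∫⁻ x, f n x ∂μ) atTop (𝓝 0)) :
    g =ᵐ[μ] 0 := by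
  refine (lintegral_eq_zero_iff' (aemeasurable_of_tendsto_metrizable_ae' hf hfg)).1 ?_
  refine le_antisymm ?_ zero_le
  calc ∫⁻ x, g x ∂μ = ∫⁻ x, liminf (fun n => f n x) atTop ∂μ :=
        lintegral_congr_ae (hfg.mono fun x hx => hx.liminf_eq.symm)
    _ ≤ liminf (fun n => ∫⁻ x, f n x ∂μ) atTop := lintegral_liminf_le' hf
    _ = 0 := hf0.liminf_eq

theorem stmt10_general
    {d : ℕ} {D : Set (Fin d → ℝ)} (hDcomp : IsCompact D)
    {φ : ℕ → (Fin d → ℝ) → ℂ} (hφmeas : ∀ j, Measurable (φ j))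
    (hφL2 : ∀ j, MemLp (φ j) 2 (volume.restrict D))
    (hON : ∀ j k, (∫ x in D, φ j x * (starRingEnd ℂ) (φ k x)) = if j = k then 1 else 0)
    {pX : (Fin d → ℝ) → ℝ} (hpXmeas : Measurable pX)
    {ν : ℝ} (hν : 0 < ν) (hνinf : ∀ x ∈ D, ν ≤ pX x)
    (Λ : ℕ → ℝ)
    (hΛ : Tendsto (fun m : ℕ => (m : ℝ) / (Λ m) ^ 2) atTop (𝓝 0))
    (gInf : (Fin d → ℝ) × (Fin d → ℝ) → ℂ)
    (hlim : ∀ᵐ p ∂((volume.restrict D).prod (volume.restrict D)),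
      Tendsto (fun m : ℕ => (1 / (Λ m : ℂ)) *
          ∑ j ∈ Finset.range m, φ j p.1 * (starRingEnd ℂ) (φ j p.2) / (pX p.2 : ℂ))
        atTop (𝓝 (gInf p))) :
    ∀ᵐ p ∂((volume.restrict D).prod (volume.restrict D)), gInf p = 0 := by
  have hνpX : ∀ᵐ y ∂(volume.restrict D), ν ≤ pX y :=
    (ae_restrict_iff' hDcomp.measurableSet).2 (ae_of_all _ hνinf)
  have hrate : ∀ m : ℕ, ‖(1 / (Λ m : ℂ))‖ ^ 2 / ν ^ 2 * (Finset.range m).card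
      = m / Λ m ^ 2 * (ν ^ 2)⁻¹ := fun m => by
    simp only [norm_div, norm_one, Complex.norm_real, Real.norm_eq_abs, div_pow, sq_abs,
      Finset.card_range]
    ring
  have hL2 : Tendsto (fun m : ℕ => ∫⁻ p, ‖(1 / (Λ m : ℂ)) * ∑ j ∈ Finset.range m,
      φ j p.1 * (starRingEnd ℂ) (φ j p.2) / (pX p.2 : ℂ)‖ₑ ^ 2
        ∂((volume.restrict D).prod (volume.restrict D))) atTop (𝓝 0) := by
    refine tendsto_of_tendsto_of_tendsto_of_le_of_le tendsto_const_nhds ?_ (fun m => zero_le)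
      fun m => lintegral_prod_enorm_sq_kernel_le hφmeas hφL2 hON hpXmeas hν hνpX _ _
    simp_rw [hrate]
    simpa using ENNReal.tendsto_ofReal (hΛ.mul_const (ν ^ 2)⁻¹)
  refine (ae_eq_zero_of_tendsto_ae_of_tendsto_lintegral_zero (fun m => ?_)
    (hlim.mono fun p hp => (ENNReal.continuous_pow 2).continuousAt.tendsto.comp hp.enorm)
    hL2).mono fun p hp => by simpa using hp
  fun_prop

/-- **Proposition 1(i), part `g`:** if `m/Λ_m² → 0` and the limit
`g_∞(x,y) = lim_m (1/Λ_m) ∑_(j<m) φ_j(x) φ_j*(y)/p_X(y)` exists a.e., it is `0` a.e. -/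
theorem stmt10
    {d : ℕ} {D : Set (Fin d → ℝ)} (hDcomp : IsCompact D)
    (hDpos : 0 < volume D) (hDfin : volume D < ⊤)
    {φ : ℕ → (Fin d → ℝ) → ℂ} (hφmeas : ∀ j, Measurable (φ j))
    (hφL2 : ∀ j, MemLp (φ j) 2 (volume.restrict D))
    (hON : ∀ j k, (∫ x in D, φ j x * (starRingEnd ℂ) (φ k x)) = if j = k then 1 else 0)
    (hComplete : ∀ g : (Fin d → ℝ) → ℂ, Measurable g → MemLp g 2 (volume.restrict D) →
      (∑' j : ℕ, ‖∫ x in D, g x * (starRingEnd ℂ) (φ j x)‖ ^ 2) = ∫ x in D, ‖g x‖ ^ 2)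
    {pX : (Fin d → ℝ) → ℝ} (hpXmeas : Measurable pX)
    (hpXpos : ∀ x ∈ D, 0 < pX x) (hpXone : (∫ x in D, pX x) = 1)
    {ν : ℝ} (hν : 0 < ν) (hνinf : ∀ x ∈ D, ν ≤ pX x)
    (Λ : ℕ → ℝ) (hΛ0 : ∀ m, 0 ≤ Λ m) (hΛmono : Monotone Λ)
    (hΛ : Tendsto (fun m : ℕ => (m : ℝ) / (Λ m) ^ 2) atTop (𝓝 0))
    (gInf : (Fin d → ℝ) × (Fin d → ℝ) → ℂ)
    (hlim : ∀ᵐ p ∂((volume.restrict D).prod (volume.restrict D)),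
      Tendsto (fun m : ℕ => (1 / (Λ m : ℂ)) *
          ∑ j ∈ Finset.range m, φ j p.1 * (starRingEnd ℂ) (φ j p.2) / (pX p.2 : ℂ))
        atTop (𝓝 (gInf p))) :
    ∀ᵐ p ∂((volume.restrict D).prod (volume.restrict D)), gInf p = 0 :=
  stmt10_general hDcomp hφmeas hφL2 hON hpXmeas hν hνinf Λ hΛ gInf hlim
end
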